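/- Let p ∈ (0,2]. Then for every x ∈ ℝ, cos x ≥ 1 − A_{p,0}·|x|^p, where A_{p,0} is the supremum of (1 − cos x)/x^p over x ∈ (0, π). Moreover, for p ∈ (0,2) equality holds if and only if x = 0, x = φ_p(0), or x = −φ_p(0); for p = 2 equality holds if and only if x = 0. -/

import Mathlib

/-- The set of values `(cos θ - cos x)/(x - θ)^p` for `x ∈ (θ, π)`. -/
noncomputable def Aset (p θ : ℝ) : Set ℝ :=
  (fun x : ℝ => (Real.cos θ - Real.cos x) / (x - θ) ^ p) '' Set.Ioo θ Real.pi

/-- `A p θ` is the supremum of `(cos θ - cos x)/(x - θ)^p` over `x ∈ (θ, π)`;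
for `θ = 0` this is the supremum of `(1 - cos x)/x^p` over `x ∈ (0, π)`. -/
noncomputable def A (p θ : ℝ) : ℝ := sSup (Aset p θ)

/-! The quotient `f(x) = (1 - cos x)/x^p` has derivative `2 sin(x/2) k(x) / x^(p+1)` with
`k(x) = x cos(x/2) - p sin(x/2)`. For `p ≤ 2` the function `k` is strictly concave on `[0, π]`
and vanishes at `0`, so it is positive before its zero `φ` and negative after it: `f` increases
up to `φ` and decreases afterwards, hence `A p 0 = f(φ)` with `φ` the unique maximiser on
`(0, π]`. Beyond `π` the bound `1 - cos x ≤ 2 = f(π) π^p < f(φ) x^p` is strict. For `p = 2`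
there is no interior maximum: `1 - cos x < x²/2` for `x ≠ 0` while `f(x) → 1/2` as `x → 0⁺`. -/

open Real Set Filter Topology

theorem StrictConcaveOn.pos_of_mem_Ioo {g : ℝ → ℝ} {s : Set ℝ}
    (hg : StrictConcaveOn ℝ s g) {a b x : ℝ} (ha : a ∈ s) (hb : b ∈ s) (hga : g a = 0)
    (hgb : g b = 0) (hx : x ∈ Ioo a b) : 0 < g x := by
  have h := hg.lt_on_openSegment ha hb (hx.1.trans hx.2).ne
    (by rwa [openSegment_eq_Ioo (hx.1.trans hx.2)])
  rwa [hga, hgb, min_self] at h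

theorem StrictConcaveOn.neg_of_lt {g : ℝ → ℝ} {s : Set ℝ} (hg : StrictConcaveOn ℝ s g)
    {a b x : ℝ} (ha : a ∈ s) (hx : x ∈ s) (hga : g a = 0) (hgb : g b = 0) (hab : a < b)
    (hbx : b < x) : g x < 0 := by
  have h := hg.lt_on_openSegment ha hx (hab.trans hbx).ne
    (by rw [openSegment_eq_Ioo (hab.trans hbx)]; exact ⟨hab, hbx⟩)
  rw [hga, hgb] at h
  exact (min_lt_iff.1 h).resolve_left (lt_irrefl 0)

noncomputable def cosRatio (p x : ℝ) : ℝ := (1 - cos x) / x ^ p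

theorem Aset_zero (p : ℝ) : Aset p 0 = cosRatio p '' Ioo 0 π := by
  simp only [Aset, cos_zero, sub_zero]
  rfl

theorem cosRatio_mul_rpow {p x : ℝ} (hx : 0 < x) : cosRatio p x * x ^ p = 1 - cos x :=
  div_mul_cancel₀ _ (rpow_pos_of_pos hx p).ne'

theorem hasDerivAt_cosRatio {p x : ℝ} (hx : 0 < x) :
    HasDerivAt (cosRatio p) ((p * (cos x - 1) + x * sin x) / x ^ (p + 1)) x := by
  have hnum : HasDerivAt (fun y => 1 - cos y) (sin x) x := by
    simpa using (hasDerivAt_cos x).const_sub 1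
  have hxp := (rpow_pos_of_pos hx p).ne'
  refine (hnum.div (hasDerivAt_rpow_const (Or.inl hx.ne')) hxp).congr_deriv ?_
  rw [rpow_sub_one hx.ne', rpow_add_one hx.ne']
  field_simp
  ring

noncomputable def cosRatioDerivFactor (p x : ℝ) : ℝ := x * cos (x / 2) - p * sin (x / 2)

theorem two_mul_sin_half_mul_cosRatioDerivFactor (p x : ℝ) :
    2 * sin (x / 2) * cosRatioDerivFactor p x = p * (cos x - 1) + x * sin x := by
  have hx : x = 2 * (x / 2) := by ring
  rw [hx, sin_two_mul, cos_two_mul_eq_one_sub, ← hx, cosRatioDerivFactor]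
  ring

theorem strictConcaveOn_cosRatioDerivFactor {p : ℝ} (hp : p ≤ 2) :
    StrictConcaveOn ℝ (Icc 0 π) (cosRatioDerivFactor p) := by
  have hhalf (x : ℝ) : HasDerivAt (fun y : ℝ => y / 2) (1 / 2) x :=
    (hasDerivAt_id x).div_const 2
  have hderiv : deriv (cosRatioDerivFactor p) =
      fun x => cos (x / 2) - x / 2 * sin (x / 2) - p / 2 * cos (x / 2) := by
    ext x
    refine (((hasDerivAt_id x).mul (hhalf x).cos).sub ((hhalf x).sin.const_mul p)).deriv.trans ?_
    simp only [id_eq]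
    ring
  have hderiv2 (x : ℝ) : deriv^[2] (cosRatioDerivFactor p) x =
      (p / 4 - 1) * sin (x / 2) - x / 4 * cos (x / 2) := by
    rw [Function.iterate_succ_apply', Function.iterate_one, hderiv]
    refine ((((hhalf x).cos.sub ((hhalf x).mul (hhalf x).sin)).sub
      ((hhalf x).cos.const_mul (p / 2))).deriv).trans ?_
    ring
  refine strictConcaveOn_of_deriv2_neg (convex_Icc 0 π)
    (by unfold cosRatioDerivFactor; fun_prop) fun x hx => ?_
  rw [interior_Icc] at hx
  have hsin : 0 < sin (x / 2) :=
    sin_pos_of_pos_of_lt_pi (half_pos hx.1) (by linarith [hx.2, pi_pos])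
  have hcos : 0 < cos (x / 2) :=
    cos_pos_of_mem_Ioo ⟨by linarith [hx.1, pi_pos], by linarith [hx.2]⟩
  rw [hderiv2]
  nlinarith [hx.1]

theorem deriv_cosRatio {p x : ℝ} (hx : 0 < x) :
    deriv (cosRatio p) x = 2 * sin (x / 2) / x ^ (p + 1) * cosRatioDerivFactor p x := by
  rw [(hasDerivAt_cosRatio hx).deriv, ← two_mul_sin_half_mul_cosRatioDerivFactor]
  ring

theorem cosRatio_lt_of_ne {p φ x : ℝ} (hp : p ≤ 2) (hφ : φ ∈ Ioo 0 π)
    (hFφ : cosRatioDerivFactor p φ = 0) (hx : x ∈ Ioc 0 π) (hxφ : x ≠ φ) :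
    cosRatio p x < cosRatio p φ := by
  have hF := strictConcaveOn_cosRatioDerivFactor hp
  have hF0 : cosRatioDerivFactor p 0 = 0 := by simp [cosRatioDerivFactor]
  have hcont : ContinuousOn (cosRatio p) (Ioi 0) := fun y hy =>
    (hasDerivAt_cosRatio hy).continuousAt.continuousWithinAt
  have hprefactor {y : ℝ} (hy : y ∈ Ioo 0 π) : 0 < 2 * sin (y / 2) / y ^ (p + 1) := by
    have := sin_pos_of_pos_of_lt_pi (half_pos hy.1) (by linarith [hy.2, pi_pos])
    have := rpow_pos_of_pos hy.1 (p + 1)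
    positivity
  have h0 : (0 : ℝ) ∈ Icc 0 π := ⟨le_rfl, pi_pos.le⟩
  have hφ' : φ ∈ Icc 0 π := Ioo_subset_Icc_self hφ
  rcases hxφ.lt_or_gt with hlt | hgt
  · refine strictMonoOn_of_deriv_pos (convex_Ioc 0 φ) (hcont.mono Ioc_subset_Ioi_self)
      (fun y hy => ?_) ⟨hx.1, hlt.le⟩ ⟨hφ.1, le_rfl⟩ hlt
    rw [interior_Ioc] at hy
    rw [deriv_cosRatio hy.1]
    exact mul_pos (hprefactor ⟨hy.1, hy.2.trans hφ.2⟩) (hF.pos_of_mem_Ioo h0 hφ' hF0 hFφ hy)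
  · refine strictAntiOn_of_deriv_neg (convex_Icc φ π)
      (hcont.mono fun y hy => hφ.1.trans_le hy.1) (fun y hy => ?_)
      ⟨le_rfl, hφ.2.le⟩ ⟨hgt.le, hx.2⟩ hgt
    rw [interior_Icc] at hy
    have hy0 : 0 < y := hφ.1.trans hy.1
    rw [deriv_cosRatio hy0]
    exact mul_neg_of_pos_of_neg (hprefactor ⟨hy0, hy.2⟩)
      (hF.neg_of_lt h0 ⟨hy0.le, hy.2.le⟩ hF0 hFφ hφ.1 hy.1)

theorem A_zero_eq_cosRatio {p φ : ℝ} (hp : p ≤ 2) (hφ : φ ∈ Ioo 0 π)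
    (hFφ : cosRatioDerivFactor p φ = 0) : A p 0 = cosRatio p φ := by
  refine IsGreatest.csSup_eq ⟨?_, ?_⟩
  · rw [Aset_zero]
    exact mem_image_of_mem _ hφ
  · rw [Aset_zero]
    rintro _ ⟨x, hx, rfl⟩
    rcases eq_or_ne x φ with rfl | hxφ
    · exact le_rfl
    · exact (cosRatio_lt_of_ne hp hφ hFφ (Ioo_subset_Ioc_self hx) hxφ).le

theorem one_sub_cos_lt_cosRatio_mul_rpow {p φ t : ℝ} (hp0 : 0 < p) (hp : p ≤ 2)
    (hφ : φ ∈ Ioo 0 π) (hFφ : cosRatioDerivFactor p φ = 0) (ht : 0 < t) (htφ : t ≠ φ) :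
    1 - cos t < cosRatio p φ * t ^ p := by
  rcases le_or_gt t π with htπ | hπt
  · rw [← cosRatio_mul_rpow ht]
    exact mul_lt_mul_of_pos_right (cosRatio_lt_of_ne hp hφ hFφ ⟨ht, htπ⟩ htφ)
      (rpow_pos_of_pos ht p)
  · have hπφ := cosRatio_lt_of_ne hp hφ hFφ ⟨pi_pos, le_rfl⟩ hφ.2.ne'
    have hπ : cosRatio p π * π ^ p = 2 := by
      rw [cosRatio_mul_rpow pi_pos, cos_pi]
      norm_num
    have hφ0 : 0 < cosRatio p φ := by
      have := rpow_pos_of_pos pi_pos p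
      nlinarith
    calc 1 - cos t ≤ cosRatio p π * π ^ p := by rw [hπ]; linarith [neg_one_le_cos t]
      _ < cosRatio p φ * π ^ p := mul_lt_mul_of_pos_right hπφ (rpow_pos_of_pos pi_pos p)
      _ ≤ cosRatio p φ * t ^ p := by gcongr

theorem one_sub_mul_rpow_abs_le_cos_and_eq_iff {p a : ℝ} (hp : 0 < p) {Z : Set ℝ}
    (hZ : ∀ t ∈ Z, 1 - cos t = a * t ^ p)
    (hlt : ∀ t, 0 < t → t ∉ Z → 1 - cos t < a * t ^ p) (x : ℝ) :
    1 - a * |x| ^ p ≤ cos x ∧ (cos x = 1 - a * |x| ^ p ↔ x = 0 ∨ |x| ∈ Z) := by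
  rw [← cos_abs]
  rcases eq_or_ne x 0 with rfl | hx
  · simp [zero_rpow hp.ne']
  by_cases hxZ : |x| ∈ Z
  · have := hZ _ hxZ
    exact ⟨by linarith, by simp only [hxZ, or_true, iff_true]; linarith⟩
  · have := hlt _ (abs_pos.2 hx) hxZ
    exact ⟨by linarith, by simp only [hx, hxZ, or_self, iff_false]; linarith⟩

theorem one_sub_cos_lt_half_mul_rpow_two {t : ℝ} (ht : t ≠ 0) :
    1 - cos t < 1 / 2 * t ^ (2 : ℝ) := by
  rw [rpow_two]
  linarith [one_sub_sq_div_two_lt_cos ht]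

theorem cosRatio_two_le_half {x : ℝ} (hx : 0 < x) : cosRatio 2 x ≤ 1 / 2 := by
  rw [cosRatio, div_le_iff₀ (rpow_pos_of_pos hx 2)]
  exact (one_sub_cos_lt_half_mul_rpow_two hx.ne').le

theorem tendsto_cosRatio_two : Tendsto (cosRatio 2) (𝓝[>] 0) (𝓝 (1 / 2)) := by
  have hlower : Tendsto (fun x : ℝ => 1 / 2 - x ^ 2 * (5 / 96)) (𝓝[>] 0) (𝓝 (1 / 2)) :=
    ((continuous_const.sub ((continuous_pow 2).mul continuous_const)).tendsto' 0 (1 / 2)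
      (by norm_num)).mono_left nhdsWithin_le_nhds
  have hsmall : ∀ᶠ x in 𝓝[>] (0 : ℝ), x ∈ Ioo 0 1 := Ioo_mem_nhdsGT one_pos
  refine tendsto_of_tendsto_of_tendsto_of_le_of_le' hlower tendsto_const_nhds ?_ ?_
  · filter_upwards [hsmall] with x hx
    have hbound := abs_le.1 (cos_bound (x := x) (by rw [abs_of_pos hx.1]; exact hx.2.le))
    rw [abs_of_pos hx.1] at hbound
    rw [cosRatio, rpow_two, le_div_iff₀ (pow_pos hx.1 2)]
    nlinarith [hbound.2, hx.1, hx.2]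
  · filter_upwards [hsmall] with x hx using cosRatio_two_le_half hx.1

theorem A_two_zero : A 2 0 = 1 / 2 := by
  rw [A, Aset_zero]
  have hub : 1 / 2 ∈ upperBounds (cosRatio 2 '' Ioo 0 π) := by
    rintro _ ⟨x, hx, rfl⟩
    exact cosRatio_two_le_half hx.1
  have hclosure : 1 / 2 ∈ closure (cosRatio 2 '' Ioo 0 π) :=
    mem_closure_of_tendsto tendsto_cosRatio_two
      (by filter_upwards [Ioo_mem_nhdsGT pi_pos] with x hx using mem_image_of_mem _ hx)
  exact (isLUB_of_mem_closure hub hclosure).csSup_eq (nonempty_Ioo.2 pi_pos |>.image _)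

theorem stmt7 (p φ : ℝ) (hp : p ∈ Set.Ioc (0 : ℝ) 2)
    (hφ : p < 2 → φ ∈ Set.Ioo (0 : ℝ) Real.pi ∧
      p * (Real.cos φ - 1) + φ * Real.sin φ = 0) :
    (∀ x : ℝ, 1 - A p 0 * |x| ^ p ≤ Real.cos x) ∧
    (p < 2 → ∀ x : ℝ, (Real.cos x = 1 - A p 0 * |x| ^ p ↔ x = 0 ∨ x = φ ∨ x = -φ)) ∧
    (p = 2 → ∀ x : ℝ, (Real.cos x = 1 - A p 0 * |x| ^ p ↔ x = 0)) := by
  obtain ⟨hp0, hp2⟩ := hp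
  rcases hp2.lt_or_eq with hp2 | rfl
  · obtain ⟨hφ, hφeq⟩ := hφ hp2
    have hFφ : cosRatioDerivFactor p φ = 0 := by
      rw [← two_mul_sin_half_mul_cosRatioDerivFactor] at hφeq
      have hsin : 0 < sin (φ / 2) :=
        sin_pos_of_pos_of_lt_pi (half_pos hφ.1) (by linarith [hφ.2, pi_pos])
      exact (mul_eq_zero.1 hφeq).resolve_left (by positivity)
    have key := one_sub_mul_rpow_abs_le_cos_and_eq_iff hp0 (Z := {φ})
      (fun t ht => by rw [ht, cosRatio_mul_rpow hφ.1])
      (fun t ht htφ => one_sub_cos_lt_cosRatio_mul_rpow hp0 hp2.le hφ hFφ ht htφ)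
    rw [A_zero_eq_cosRatio hp2.le hφ hFφ]
    refine ⟨fun x => (key x).1, fun _ x => ?_, fun h => absurd h hp2.ne⟩
    rw [(key x).2, mem_singleton_iff, abs_eq hφ.1.le]
  · have key := one_sub_mul_rpow_abs_le_cos_and_eq_iff hp0 (Z := ∅) (fun _ => False.elim)
      fun t ht _ => A_two_zero ▸ one_sub_cos_lt_half_mul_rpow_two ht.ne'
    exact ⟨fun x => (key x).1, fun h => absurd h (lt_irrefl 2),
      fun _ x => by simpa using (key x).2⟩
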